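/- arXiv:2404.19395 — 5 statements merged into one kernel-verified Lean document; each statement's English description precedes it below -/
import Mathlib

section
/- Call a monomial x^r y^s ∂-positive if r > s, and a polynomial ∂-positive if it is a K-linear combination of ∂-positive monomials. Then the divided difference operator ∂ restricts to a bijection from the K-subspace of ∂-positive polynomials in K[x,y] onto the subspace of symmetric polynomials in K[x,y]. -/
/-
For symmetric `g` one has `(x - y) g = x g - s (x g)`, so it suffices to find a `∂`-positive `f`
with `f - s f = q - s q` for an arbitrary `q`. The coefficients of `q - s q` are antisymmetric
under the swap `(r, s) ↦ (s, r)` of exponents and vanish on the diagonal `r = s` (which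
antisymmetry alone would not give in characteristic 2), so the part of `q - s q` above the
diagonal is such an `f`. Injectivity holds because a polynomial that is both `∂`-positive and
symmetric has a swap-closed support lying strictly above the diagonal, hence is zero.
-/

open MvPolynomial

/-- The automorphism of `K[x,y]` swapping the two variables. -/
noncomputable def s2 {K : Type*} [Field K] :
    MvPolynomial (Fin 2) K →ₐ[K] MvPolynomial (Fin 2) K :=
  rename (Equiv.swap 0 1)

/-- A polynomial in `K[x,y]` is `∂`-positive if all its monomials `x^r y^s`
satisfy `r > s`. -/
def dPos {K : Type*} [Field K] (f : MvPolynomial (Fin 2) K) : Prop :=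
  ∀ m ∈ f.support, m 1 < m 0

theorem MvPolynomial.coeff_rename_equiv {R σ τ : Type*} [CommSemiring R] (e : σ ≃ τ)
    (φ : MvPolynomial σ R) (d : τ →₀ ℕ) :
    (rename e φ).coeff d = φ.coeff (d.equivMapDomain e.symm) := by
  have key := coeff_rename_mapDomain e e.injective φ (d.equivMapDomain e.symm)
  rwa [← Finsupp.equivMapDomain_eq_mapDomain, ← Finsupp.equivMapDomain_trans,
    Equiv.symm_trans_self, Finsupp.equivMapDomain_refl] at key

def swapExp (m : Fin 2 →₀ ℕ) : Fin 2 →₀ ℕ := m.equivMapDomain (Equiv.swap 0 1)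

@[simp] lemma swapExp_apply_zero (m : Fin 2 →₀ ℕ) : swapExp m 0 = m 1 := rfl
@[simp] lemma swapExp_apply_one (m : Fin 2 →₀ ℕ) : swapExp m 1 = m 0 := rfl

lemma swapExp_swapExp (m : Fin 2 →₀ ℕ) : swapExp (swapExp m) = m := by
  ext i; fin_cases i <;> rfl

lemma swapExp_eq_self_of_apply_eq {m : Fin 2 →₀ ℕ} (h : m 0 = m 1) : swapExp m = m := by
  ext i; fin_cases i
  exacts [h.symm, h]

section

variable {K : Type*} [Field K]

lemma coeff_s2 (f : MvPolynomial (Fin 2) K) (m : Fin 2 →₀ ℕ) :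
    (s2 f).coeff m = f.coeff (swapExp m) :=
  coeff_rename_equiv _ f m

lemma s2_s2 (f : MvPolynomial (Fin 2) K) : s2 (s2 f) = f := by
  ext m; rw [coeff_s2, coeff_s2, swapExp_swapExp]

lemma s2_X_zero_sub_X_one : s2 (X 0 - X 1 : MvPolynomial (Fin 2) K) = -(X 0 - X 1) := by
  simp [s2]

lemma X_zero_sub_X_one_ne_zero : (X 0 - X 1 : MvPolynomial (Fin 2) K) ≠ 0 :=
  sub_ne_zero.mpr <| (X_injective (R := K)).ne (by decide)

lemma s2_eq_self_of_X_zero_sub_X_one_mul_eq {f D : MvPolynomial (Fin 2) K}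
    (h : (X 0 - X 1) * D = f - s2 f) : s2 D = D := by
  refine mul_left_cancel₀ (X_zero_sub_X_one_ne_zero (K := K)) ?_
  have hs := congrArg s2 h
  rw [map_mul, s2_X_zero_sub_X_one, map_sub, s2_s2] at hs
  linear_combination -hs - h

lemma dPos_sub {f f' : MvPolynomial (Fin 2) K} (hf : dPos f) (hf' : dPos f') : dPos (f - f') := by
  classical
  intro m hm
  rcases Finset.mem_union.mp (support_sub (Fin 2) f f' hm) with hm | hm
  exacts [hf m hm, hf' m hm]

lemma eq_zero_of_dPos_of_s2_eq_self {f : MvPolynomial (Fin 2) K} (hf : dPos f) (hs : s2 f = f) :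
    f = 0 := by
  ext m
  by_contra hm
  have hsm : f.coeff (swapExp m) ≠ 0 := by rwa [← coeff_s2, hs]
  have hlt := hf m (mem_support_iff.mpr hm)
  have hgt := hf _ (mem_support_iff.mpr hsm)
  rw [swapExp_apply_zero, swapExp_apply_one] at hgt
  exact lt_asymm hlt hgt

lemma X_zero_sub_X_one_mul_eq_sub_s2 {g : MvPolynomial (Fin 2) K} (hg : s2 g = g) :
    (X 0 - X 1) * g = X 0 * g - s2 (X 0 * g) := by
  rw [map_mul, hg]
  simp [s2, sub_mul]

noncomputable def dPosPart (f : MvPolynomial (Fin 2) K) : MvPolynomial (Fin 2) K :=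
  ∑ m ∈ f.support with m 1 < m 0, monomial m (f.coeff m)

lemma coeff_dPosPart (f : MvPolynomial (Fin 2) K) (m : Fin 2 →₀ ℕ) :
    (dPosPart f).coeff m = if m 1 < m 0 then f.coeff m else 0 := by
  classical
  by_cases h : f.coeff m = 0 <;> simp [dPosPart, coeff_sum, coeff_monomial, h]

lemma dPos_dPosPart (f : MvPolynomial (Fin 2) K) : dPos (dPosPart f) := by
  intro m hm
  by_contra h
  rw [mem_support_iff, coeff_dPosPart, if_neg h] at hm
  exact hm rfl

lemma dPosPart_sub_s2_dPosPart (q : MvPolynomial (Fin 2) K) :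
    dPosPart (q - s2 q) - s2 (dPosPart (q - s2 q)) = q - s2 q := by
  ext m
  simp only [coeff_sub, coeff_s2, coeff_dPosPart, swapExp_swapExp, swapExp_apply_zero,
    swapExp_apply_one]
  rcases lt_trichotomy (m 1) (m 0) with h | h | h
  · simp [h, h.not_gt]
  · simp [h, swapExp_eq_self_of_apply_eq h.symm]
  · simp [h, h.not_gt]

end

/-- The divided difference operator `∂` restricts to a bijection from the
`∂`-positive polynomials onto the symmetric polynomials in `K[x,y]`:
it maps `∂`-positive polynomials to symmetric ones, is injective on them,
and every symmetric polynomial has a `∂`-positive preimage. -/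
theorem divided_difference_bijection {K : Type*} [Field K] :
    (∀ f Df : MvPolynomial (Fin 2) K, dPos f →
      (X 0 - X 1) * Df = f - s2 f → s2 Df = Df)
    ∧ (∀ f f' : MvPolynomial (Fin 2) K, dPos f → dPos f' →
      f - s2 f = f' - s2 f' → f = f')
    ∧ (∀ g : MvPolynomial (Fin 2) K, s2 g = g →
      ∃ f : MvPolynomial (Fin 2) K, dPos f ∧ f - s2 f = (X 0 - X 1) * g) := by
  refine ⟨fun f Df _ h => s2_eq_self_of_X_zero_sub_X_one_mul_eq h, ?_, ?_⟩
  · intro f f' hf hf' h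
    refine sub_eq_zero.mp (eq_zero_of_dPos_of_s2_eq_self (dPos_sub hf hf') ?_)
    rw [map_sub]
    linear_combination -h
  · intro g hg
    refine ⟨dPosPart (X 0 * g - s2 (X 0 * g)), dPos_dPosPart _, ?_⟩
    rw [dPosPart_sub_s2_dPosPart, X_zero_sub_X_one_mul_eq_sub_s2 hg]
end

section
/- If π is given by π f = ∂(Pf) + Q·∂f + R·f + S·sf, then Q_0 := π(x) - x·π(1) equals sP + Q - (x - y)·S and R_0 := π(1) equals R + S + ∂P; moreover π f = Q_0·∂f + R_0·f for all f, so every polynomial divided difference operator admits a unique presentation with P = S = 0. -/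
open MvPolynomial

/-- For `π f = ∂(Pf) + Q·∂f + R·f + S·sf`, the polynomial
`Q_0 := π(x) - x·π(1)` equals `sP + Q - (x - y)·S`, the polynomial
`R_0 := π(1)` equals `R + S + ∂P`, one has `π f = Q_0·∂f + R_0·f` for all `f`,
and this presentation with `P = S = 0` is unique. Here
`π(x) = ∂(Px) + Q·∂x + R·x + S·y` and `π(1) = ∂P + R + S`. -/
theorem first_canonical_form {K : Type*} [Field K]
    (P Q R S DP DPx Dx : MvPolynomial (Fin 2) K)
    (hDP : (X 0 - X 1) * DP = P - s2 P)
    (hDPx : (X 0 - X 1) * DPx = P * X 0 - s2 (P * X 0))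
    (hDx : (X 0 - X 1) * Dx = X 0 - s2 (X 0 : MvPolynomial (Fin 2) K)) :
    ((DPx + Q * Dx + R * X 0 + S * X 1) - X 0 * (DP + R + S)
        = s2 P + Q - (X 0 - X 1) * S)
    ∧ (DP + R + S = R + S + DP)
    ∧ (∀ f Df DPf : MvPolynomial (Fin 2) K,
        (X 0 - X 1) * Df = f - s2 f →
        (X 0 - X 1) * DPf = P * f - s2 (P * f) →
        DPf + Q * Df + R * f + S * s2 f
          = ((DPx + Q * Dx + R * X 0 + S * X 1) - X 0 * (DP + R + S)) * Df
            + (DP + R + S) * f)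
    ∧ (∀ Q0' R0' : MvPolynomial (Fin 2) K,
        (∀ f Df DPf : MvPolynomial (Fin 2) K,
          (X 0 - X 1) * Df = f - s2 f →
          (X 0 - X 1) * DPf = P * f - s2 (P * f) →
          DPf + Q * Df + R * f + S * s2 f = Q0' * Df + R0' * f) →
        Q0' = (DPx + Q * Dx + R * X 0 + S * X 1) - X 0 * (DP + R + S)
          ∧ R0' = DP + R + S) := by
  have hs0 : s2 (X 0 : MvPolynomial (Fin 2) K) = X 1 := by
    simp [s2, rename_X]
  have hxy : (X 0 - X 1 : MvPolynomial (Fin 2) K) ≠ 0 := by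
    rw [sub_ne_zero]
    intro h
    have := MvPolynomial.X_injective h
    simp [Fin.ext_iff] at this
  have hcancel : ∀ a b : MvPolynomial (Fin 2) K,
      (X 0 - X 1) * a = (X 0 - X 1) * b → a = b :=
    fun a b h => mul_left_cancel₀ hxy h
  have hDx1 : Dx = 1 := hcancel _ _ (by rw [hDx, hs0, mul_one])
  have hDPx' : (X 0 - X 1) * DPx = P * X 0 - s2 P * X 1 := by
    rw [hDPx, map_mul, hs0]
  have hQ0 : (DPx + Q * Dx + R * X 0 + S * X 1) - X 0 * (DP + R + S)
      = s2 P + Q - (X 0 - X 1) * S := by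
    subst hDx1
    apply hcancel
    linear_combination hDPx' - X 0 * hDP
  refine ⟨hQ0, by ring, ?_, ?_⟩
  · intro f Df DPf hf hPf
    have hPf' : (X 0 - X 1) * DPf = P * f - s2 P * s2 f := by
      rw [hPf, map_mul]
    rw [hQ0]
    apply hcancel
    linear_combination hPf' - (s2 P - (X 0 - X 1) * S) * hf - f * hDP
  · intro Q0' R0' h
    have h1 := h 1 0 DP (by simp) (by simpa using hDP)
    simp only [map_one, mul_zero, mul_one, zero_add, add_zero] at h1
    have h2 := h (X 0) 1 DPx (by rw [hs0, mul_one]) hDPx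
    rw [hs0, mul_one] at h2
    constructor
    · rw [hDx1]
      linear_combination X 0 * h1 - h2
    · linear_combination -h1
end

section
/- Let T(x,y) = axy + bx + cy + d with a, b, c, d in a field K. Then the identity T(x,z)·[T(y,x)(y-z) + T(y,z)(x-y)] = T(x,y)·T(y,z)·(x-z) holds in K[x,y,z] if and only if ad = bc. -/
open MvPolynomial

/-- The polynomial `T(u,v) = auv + bu + cv + d` in `K[x,y,z]`. -/
noncomputable def Tpoly {K : Type*} [Field K] (a b c d : K)
    (u v : MvPolynomial (Fin 3) K) : MvPolynomial (Fin 3) K :=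
  C a * u * v + C b * u + C c * v + C d

lemma T_key {K : Type*} [Field K] (a b c d : K) :
    Tpoly a b c d (X 0) (X 2)
        * (Tpoly a b c d (X 1) (X 0) * (X 1 - X 2)
          + Tpoly a b c d (X 1) (X 2) * (X 0 - X 1))
      - Tpoly a b c d (X 0) (X 1) * Tpoly a b c d (X 1) (X 2) * (X 0 - X 2)
    = (C b * C c - C a * C d) *
        ((X 0 - X 1) * ((X 1 - X 2) * (X 0 - X 2))) := by
  unfold Tpoly
  ring

/-- For `T(x,y) = axy + bx + cy + d`, the identity
`T(x,z)·[T(y,x)(y-z) + T(y,z)(x-y)] = T(x,y)·T(y,z)·(x-z)` in `K[x,y,z]`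
holds if and only if `ad = bc`. -/
theorem T_identity_iff {K : Type*} [Field K] (a b c d : K) :
    Tpoly a b c d (X 0) (X 2)
        * (Tpoly a b c d (X 1) (X 0) * (X 1 - X 2)
          + Tpoly a b c d (X 1) (X 2) * (X 0 - X 1))
      = Tpoly a b c d (X 0) (X 1) * Tpoly a b c d (X 1) (X 2) * (X 0 - X 2)
    ↔ a * d = b * c := by
  have hX : ∀ i j : Fin 3, i ≠ j → (X i - X j : MvPolynomial (Fin 3) K) ≠ 0 := by
    intro i j hij
    exact sub_ne_zero.mpr (fun h => hij (MvPolynomial.X_injective h))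
  have hQ : ((X 0 - X 1) * ((X 1 - X 2) * (X 0 - X 2)) : MvPolynomial (Fin 3) K) ≠ 0 :=
    mul_ne_zero (hX 0 1 (by decide))
      (mul_ne_zero (hX 1 2 (by decide)) (hX 0 2 (by decide)))
  rw [← sub_eq_zero, T_key, mul_eq_zero]
  constructor
  · rintro (h | h)
    · have : b * c - a * d = 0 := by
        have := MvPolynomial.C_injective (Fin 3) K
          (by simpa [map_sub, map_mul] using h : (C (b * c - a * d) : MvPolynomial (Fin 3) K) = C 0)
        simpa using this
      exact (sub_eq_zero.mp this).symm
    · exact absurd h hQ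
  · intro h
    left
    have : (C (b * c - a * d) : MvPolynomial (Fin 3) K) = 0 := by
      rw [show b * c - a * d = 0 from sub_eq_zero.mpr h.symm]; simp
    simpa [map_sub, map_mul] using this
end

section
/- Let a, b, c, d, α, β, e be constants in a field K, set R_+(x,y) = αx and let Q ∈ K[x,y] satisfy ∂Q = β(x+y) + e. Then the identity (axy + bx + by + d)·∂R_+ + R_+·sR_+ + (c-b)·∂(Q + xR_+) + ∂Q·(R_+ + sR_+ + ∂Q) = ν holds for some constant ν if and only if either (α = 0 and β = 0), or (α = -a, β = 0, e = -c), or (α = -a, β = a, e = b). -/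
open MvPolynomial

/-- With `R_+(x,y) = αx` and `Q` satisfying `∂Q = β(x+y) + e`, the expression
`(axy + bx + by + d)·∂R_+ + R_+·sR_+ + (c-b)·∂(Q + xR_+) + ∂Q·(R_+ + sR_+ + ∂Q)`
equals a constant `ν` if and only if either `α = β = 0`, or
`α = -a, β = 0, e = -c`, or `α = -a, β = a, e = b`. -/
theorem constant_condition {K : Type*} [Field K] (a b c d α β e : K)
    (Q DRp DQxR : MvPolynomial (Fin 2) K)
    (hDQ : (X 0 - X 1) * (C β * (X 0 + X 1) + C e) = Q - s2 Q)
    (hDRp : (X 0 - X 1) * DRp = C α * X 0 - s2 (C α * X 0))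
    (hDQxR : (X 0 - X 1) * DQxR
      = (Q + X 0 * (C α * X 0)) - s2 (Q + X 0 * (C α * X 0))) :
    (∃ ν : K,
        (C a * X 0 * X 1 + C b * X 0 + C b * X 1 + C d) * DRp
          + (C α * X 0) * s2 (C α * X 0)
          + (C c - C b) * DQxR
          + (C β * (X 0 + X 1) + C e)
            * ((C α * X 0) + s2 (C α * X 0) + (C β * (X 0 + X 1) + C e))
        = C ν)
      ↔ (α = 0 ∧ β = 0) ∨ (α = -a ∧ β = 0 ∧ e = -c)
        ∨ (α = -a ∧ β = a ∧ e = b) := by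
  have hs0 : s2 (C α * X 0) = C α * X (1 : Fin 2) := by simp [s2]
  have hxy : (X 0 - X 1 : MvPolynomial (Fin 2) K) ≠ 0 :=
    sub_ne_zero.mpr (fun h => by simpa using (X_injective h : (0 : Fin 2) = 1))
  have h1 : DRp = C α := by
    apply mul_left_cancel₀ hxy
    rw [hDRp, hs0]; ring
  have h2 : DQxR = (C α + C β) * (X 0 + X 1) + C e := by
    apply mul_left_cancel₀ hxy
    rw [hDQxR]
    have hs1 : s2 (Q + X 0 * (C α * X 0)) = s2 Q + X 1 * (C α * X 1) := by
      simp [s2, map_add, map_mul]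
    rw [hs1]
    linear_combination (hDQ.symm : Q - s2 Q = (X 0 - X 1) * (C β * (X 0 + X 1) + C e))
  rw [h1, h2, hs0]
  constructor
  · rintro ⟨ν, hν⟩
    have hν' : C (a*α + α*α + (β*(α+β) + β*(α+β))) * (X 0 * X 1)
        + C (β*(α+β)) * X 0 ^ 2 + C (β*(α+β)) * X 1 ^ 2
        + C (α*b + (α+β)*(c-b) + β*e + (α+β)*e) * X 0
        + C (α*b + (α+β)*(c-b) + β*e + (α+β)*e) * X 1
        + C (d*α + (c-b)*e + e*e) = (C ν : MvPolynomial (Fin 2) K) := by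
      rw [← hν]; simp only [map_add, map_mul, map_sub]; ring
    have hB := congrArg (coeff (Finsupp.single 0 2)) hν'
    have hA := congrArg (coeff (Finsupp.single 0 1 + Finsupp.single 1 1)) hν'
    have hD := congrArg (coeff (Finsupp.single 0 1)) hν'
    have hxx : (X 0 * X 1 : MvPolynomial (Fin 2) K)
        = monomial (Finsupp.single 0 1 + Finsupp.single 1 1) 1 := by
      rw [monomial_add_single]; simp [X]
    rw [hxx] at hB hA hD
    simp only [coeff_add, coeff_C_mul, coeff_X_pow, coeff_X', coeff_C, coeff_monomial,
      Finsupp.single_eq_single_iff, Finsupp.single_eq_zero, Finsupp.ext_iff,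
      Fin.forall_fin_two] at hB hA hD
    simp at hB hA hD
    -- hB : β = 0 ∨ α + β = 0
    rcases hB with hβ | hαβ
    · subst hβ
      have hA' : α * (a + α) = 0 := by linear_combination hA
      rcases mul_eq_zero.mp hA' with hα | hα
      · exact Or.inl ⟨hα, rfl⟩
      · have hα' : α = -a := by linear_combination hα
        have hce : a * (c + e) = 0 := by
          rw [hα'] at hD; linear_combination -hD
        rcases mul_eq_zero.mp hce with ha | hce
        · exact Or.inl ⟨by rw [hα', ha, neg_zero], rfl⟩
        · exact Or.inr (Or.inl ⟨hα', rfl, by linear_combination hce⟩)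
    · have hα : α = -β := by linear_combination hαβ
      have hA' : β * (β - a) = 0 := by rw [hα] at hA; linear_combination hA
      rcases mul_eq_zero.mp hA' with hβ | hβa
      · exact Or.inl ⟨by rw [hα, hβ, neg_zero], hβ⟩
      · have hβ : β = a := by linear_combination hβa
        have heb : a * (e - b) = 0 := by
          rw [hα, hβ] at hD; linear_combination hD
        rcases mul_eq_zero.mp heb with ha | heb
        · exact Or.inl ⟨by rw [hα, hβ, ha, neg_zero], by rw [hβ, ha]⟩
        · exact Or.inr (Or.inr ⟨by rw [hα, hβ], hβ, by linear_combination heb⟩)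
  · rintro (⟨hα, hβ⟩ | ⟨hα, hβ, he⟩ | ⟨hα, hβ, he⟩) <;> rw [hα, hβ]
    · exact ⟨(c-b)*e + e*e, by
        simp only [map_add, map_mul, map_sub, map_zero, map_neg]; ring⟩
    · rw [he]
      exact ⟨d*(-a) + (c-b)*(-c) + (-c)*(-c), by
        simp only [map_add, map_mul, map_sub, map_zero, map_neg]; ring⟩
    · rw [he]
      exact ⟨d*(-a) + (c-b)*b + b*b, by
        simp only [map_add, map_mul, map_sub, map_zero, map_neg]; ring⟩
end

section
/- Let r be a univariate polynomial over a field K and T̂ ∈ K[x,y] such that r(x)·T̂(x,y) - x is symmetric in x and y. Then deg r ≤ 1. -/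
open MvPolynomial

/-!
Swapping the variables turns the hypothesis into `r(y)·T̂(y,x) - y = r(x)·T̂(x,y) - x`.
Specialising `x` to a root `α` of `r` (in an algebraic closure) and keeping `y` as the
variable gives `r(y)·T̂(y,α) = y - α`, so `r ∣ y - α` and `deg r ≤ 1`.
-/

section Swap

variable {K : Type*} [Field K]

theorem s2_X_zero : s2 (X 0 : MvPolynomial (Fin 2) K) = X 1 := by
  simp [s2, rename_X]

theorem s2_aeval_X_zero (r : Polynomial K) :
    s2 (Polynomial.aeval (X 0 : MvPolynomial (Fin 2) K) r) = Polynomial.aeval (X 1) r := by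
  rw [← Polynomial.aeval_algHom_apply, s2_X_zero]

end Swap

theorem aeval_dvd_sub_of_symmetric {K A : Type*} [Field K] [CommRing A] [Algebra K A]
    {r : Polynomial K} {T : MvPolynomial (Fin 2) K}
    (hsym : s2 (Polynomial.aeval (X 0 : MvPolynomial (Fin 2) K) r * T - X 0)
      = Polynomial.aeval (X 0 : MvPolynomial (Fin 2) K) r * T - X 0)
    {a : A} (ha : Polynomial.aeval a r = 0) (b : A) :
    Polynomial.aeval b r ∣ b - a := by
  let ev : MvPolynomial (Fin 2) K →ₐ[K] A := aeval ![a, b]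
  have ev_X_zero : ev (X 0) = a := aeval_X _ 0
  have ev_X_one : ev (X 1) = b := aeval_X _ 1
  rw [map_sub, map_mul, s2_aeval_X_zero, s2_X_zero] at hsym
  have hev := congrArg ev hsym
  simp only [map_sub, map_mul, ← Polynomial.aeval_algHom_apply, ev_X_zero, ev_X_one, ha,
    zero_mul] at hev
  exact ⟨ev (s2 T), by linear_combination -hev⟩

theorem natDegree_le_one_of_map_dvd_X_sub_C {K L : Type*} [Field K] [Field L] [Algebra K L]
    {r : Polynomial K} {α : L} (h : r.map (algebraMap K L) ∣ Polynomial.X - Polynomial.C α) :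
    r.natDegree ≤ 1 := by
  rw [← Polynomial.natDegree_map (algebraMap K L), ← Polynomial.natDegree_X_sub_C α]
  exact Polynomial.natDegree_le_of_dvd h (Polynomial.X_sub_C_ne_zero α)

/-- If `r` is a univariate polynomial and `T̂ ∈ K[x,y]` is such that
`r(x)·T̂(x,y) - x` is symmetric in `x` and `y`, then `deg r ≤ 1`. -/
theorem deg_r_le_one {K : Type*} [Field K]
    (r : Polynomial K) (That : MvPolynomial (Fin 2) K)
    (hsym : s2 (Polynomial.aeval (X 0 : MvPolynomial (Fin 2) K) r * That - X 0)
      = Polynomial.aeval (X 0 : MvPolynomial (Fin 2) K) r * That - X 0) :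
    r.natDegree ≤ 1 := by
  rcases eq_or_ne r.natDegree 0 with hr | hr
  · omega
  obtain ⟨α, hα⟩ := IsAlgClosed.exists_aeval_eq_zero (AlgebraicClosure K) r
    (Polynomial.degree_ne_of_natDegree_ne hr)
  have hCα : Polynomial.aeval (Polynomial.C α) r = 0 :=
    (Polynomial.aeval_algHom_apply Polynomial.CAlgHom α r).trans (by rw [hα, map_zero])
  have hdvd := aeval_dvd_sub_of_symmetric hsym hCα (Polynomial.X : Polynomial (AlgebraicClosure K))
  rw [Polynomial.aeval_X_left_eq_map] at hdvd
  exact natDegree_le_one_of_map_dvd_X_sub_C hdvd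
end
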